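/- If J[W,Z] is p-leading with μ_p(W,Z) ≥ 1, then the induced subgraph J[Z \ W] is connected. -/
import Mathlib

open SimpleGraph

/-- Expected number of copies of `F` in `G(n,p)`: `(n)_{v_F} p^{e_F} / aut(F)`. -/
noncomputable def expCount (n : ℕ) (p : ℝ) {β : Type} [Fintype β] (F : SimpleGraph β) : ℝ :=
  (n.descFactorial (Fintype.card β)) * p ^ (Nat.card F.edgeSet) / (Nat.card (F ≃g F))

/-- `J` is `q`-sparse (w.r.t. ground-set size `n`): every subgraph `I ⊆ J` has
`(n)_{v_I} q^{e_I} / aut(I) ≥ 1`. -/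
def ExpSparse (n : ℕ) (q : ℝ) {β : Type} (J : SimpleGraph β) : Prop :=
  ∀ I : J.Subgraph, 1 ≤ (n.descFactorial (Nat.card I.verts)) * q ^ (Nat.card I.edgeSet) /
      (Nat.card (I.coe ≃g I.coe))

/-- `N(H,F)`: the number of subgraphs of `H` isomorphic to `F`. -/
noncomputable def copyCount {α β : Type} (H : SimpleGraph α) (F : SimpleGraph β) : ℕ :=
  Nat.card {H' : H.Subgraph // Nonempty (F ≃g H'.coe)}

/-- Edge set of the rooted graph `J[W,Z]`: edges of `J` inside `Z` not inside `W`. -/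
def rootedEdges {V : Type} (J : SimpleGraph V) (W Z : Finset V) : Set (Sym2 V) :=
  {e | e ∈ J.edgeSet ∧ (∀ x ∈ e, x ∈ Z) ∧ ¬ ∀ x ∈ e, x ∈ W}

/-- `e(W,Z)`: the number of edges of `J[W,Z]`. -/
noncomputable def eWZ {V : Type} (J : SimpleGraph V) (W Z : Finset V) : ℕ :=
  Nat.card (rootedEdges J W Z)

/-- `aut(W,Z)`: the number of automorphisms of `J[W,Z]` fixing `W` pointwise
(realized as permutations of the ground set fixing everything outside `Z`). -/
noncomputable def autWZ {V : Type} (J : SimpleGraph V) (W Z : Finset V) : ℕ :=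
  Nat.card {σ : Equiv.Perm V // (∀ v ∈ W, σ v = v) ∧ (∀ v, v ∉ Z → σ v = v) ∧
     ∀ e, e ∈ rootedEdges J W Z ↔ Sym2.map σ e ∈ rootedEdges J W Z}

/-- `μ_p(W,Z) = n^{v(W,Z)} p^{e(W,Z)} / aut(W,Z)`. -/
noncomputable def mu {V : Type} [DecidableEq V] (n : ℕ) (p : ℝ) (J : SimpleGraph V)
    (W Z : Finset V) : ℝ :=
  (n : ℝ) ^ ((Z \ W).card) * p ^ (eWZ J W Z) / (autWZ J W Z)

/-- `J[W,Z]` is `p`-leading: `μ_p(Y,Z) < 1` for all `W ⊊ Y ⊊ Z`. -/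
def Leading {V : Type} [DecidableEq V] (n : ℕ) (p : ℝ) (J : SimpleGraph V)
    (W Z : Finset V) : Prop :=
  ∀ Y : Finset V, W ⊂ Y → Y ⊂ Z → mu n p J Y Z < 1

/-! ### Auxiliary lemmas -/

section Aux
set_option linter.unusedSectionVars false
set_option linter.unusedVariables false

variable {V : Type} [DecidableEq V] {J : SimpleGraph V} {W Z A B : Finset V}

lemma LC.mem_rooted_pair {x y : V} :
    s(x,y) ∈ rootedEdges J W Z ↔ J.Adj x y ∧ x ∈ Z ∧ y ∈ Z ∧ ¬(x ∈ W ∧ y ∈ W) := by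
  simp only [rootedEdges, Set.mem_setOf_eq, Sym2.mem_iff, mem_edgeSet]
  constructor
  · rintro ⟨h1, h2, h3⟩
    exact ⟨h1, h2 x (Or.inl rfl), h2 y (Or.inr rfl),
      fun hxy => h3 (by rintro z (rfl | rfl); exacts [hxy.1, hxy.2])⟩
  · rintro ⟨h1, h2, h3, h4⟩
    refine ⟨h1, by rintro z (rfl | rfl) <;> assumption,
      fun h => h4 ⟨h x (Or.inl rfl), h y (Or.inr rfl)⟩⟩

lemma LC.sym2_map_fix {σ : Equiv.Perm V} {e : Sym2 V} (h : ∀ v ∈ e, σ v = v) :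
    Sym2.map σ e = e := by
  induction e using Sym2.ind with
  | _ x y => simp [h x (by simp), h y (by simp)]

variable (hW : W ⊆ Z) (hA : A ∪ B = Z \ W) (hd : Disjoint A B)
  (hAB : ∀ a ∈ A, ∀ b ∈ B, ¬ J.Adj a b)

include hA in
lemma LC.memZ (hW : W ⊆ Z) : ∀ v, v ∈ Z ↔ v ∈ W ∨ v ∈ A ∨ v ∈ B := by
  intro v
  have := Finset.ext_iff.mp hA v
  simp only [Finset.mem_union, Finset.mem_sdiff] at this
  constructor
  · intro hv
    by_cases hvW : v ∈ W
    · exact Or.inl hvW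
    · exact Or.inr (this.mpr ⟨hv, hvW⟩)
  · rintro (h | h)
    · exact hW h
    · exact (this.mp h).1

include hA in
lemma LC.notW : ∀ v, (v ∈ A ∨ v ∈ B) → v ∉ W := by
  intro v hv
  have := Finset.ext_iff.mp hA v
  simp only [Finset.mem_union, Finset.mem_sdiff] at this
  exact (this.mp hv).2

lemma LC.prop_split {aW aA aB bW bA bB : Prop}
    (hWx : (aA ∨ aB) → ¬aW) (hWy : (bA ∨ bB) → ¬bW)
    (hdx : aA → aB → False) (hdy : bA → bB → False)
    (e1 : aA → bB → False) (e2 : bA → aB → False)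
    (hx : aW ∨ aA ∨ aB) (hy : bW ∨ bA ∨ bB) (h4 : ¬(aW ∧ bW)) :
    (¬((aW ∨ aA) ∧ (bW ∨ bA))) ∨ (¬((aW ∨ aB) ∧ (bW ∨ bB))) := by tauto

lemma LC.prop_disj {aW aA aB bW bA bB : Prop}
    (hdx : aA → aB → False) (hdy : bA → bB → False)
    (hx : aW ∨ aA ∨ aB) (hy : bW ∨ bA ∨ bB)
    (hn1 : ¬((aW ∨ aA) ∧ (bW ∨ bA))) (hn2 : ¬((aW ∨ aB) ∧ (bW ∨ bB))) :
    (aA ∧ bB) ∨ (bA ∧ aB) := by tauto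

include hW hA hd hAB in
lemma LC.rooted_split :
    rootedEdges J W Z = rootedEdges J (W ∪ A) Z ∪ rootedEdges J (W ∪ B) Z := by
  ext e
  induction e using Sym2.ind with
  | _ x y =>
    have hWx := LC.notW hA x
    have hWy := LC.notW hA y
    have hdx : x ∈ A → x ∈ B → False := fun h1 h2 => (Finset.disjoint_left.mp hd h1) h2
    have hdy : y ∈ A → y ∈ B → False := fun h1 h2 => (Finset.disjoint_left.mp hd h1) h2
    simp only [Set.mem_union, LC.mem_rooted_pair, Finset.mem_union]
    constructor
    · rintro ⟨h1, h2, h3, h4⟩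
      rcases LC.prop_split hWx hWy hdx hdy (fun ha hb => hAB x ha y hb h1)
        (fun ha hb => hAB y ha x hb h1.symm) ((LC.memZ hA hW x).mp h2)
        ((LC.memZ hA hW y).mp h3) h4 with h | h
      · exact Or.inl ⟨h1, h2, h3, h⟩
      · exact Or.inr ⟨h1, h2, h3, h⟩
    · rintro (⟨h1, h2, h3, h4⟩ | ⟨h1, h2, h3, h4⟩) <;>
        exact ⟨h1, h2, h3, fun h => h4 ⟨Or.inl h.1, Or.inl h.2⟩⟩

include hW hA hd hAB in
lemma LC.rooted_disj :
    Disjoint (rootedEdges J (W ∪ A) Z) (rootedEdges J (W ∪ B) Z) := by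
  rw [Set.disjoint_left]
  intro e h1 h2
  induction e using Sym2.ind with
  | _ x y =>
    have hdx : x ∈ A → x ∈ B → False := fun h1 h2 => (Finset.disjoint_left.mp hd h1) h2
    have hdy : y ∈ A → y ∈ B → False := fun h1 h2 => (Finset.disjoint_left.mp hd h1) h2
    rw [LC.mem_rooted_pair] at h1 h2
    obtain ⟨ha, hxZ, hyZ, hn1⟩ := h1
    obtain ⟨-, -, -, hn2⟩ := h2
    simp only [Finset.mem_union] at hn1 hn2
    rcases LC.prop_disj hdx hdy ((LC.memZ hA hW x).mp hxZ) ((LC.memZ hA hW y).mp hyZ) hn1 hn2 with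
      ⟨u, v⟩ | ⟨u, v⟩
    · exact hAB x u y v ha
    · exact hAB y u x v ha.symm

include hW hA hd in
lemma LC.sdiff_WA : Z \ (W ∪ A) = B := by
  ext v
  have h1 := LC.memZ hA hW v
  have h2 := LC.notW hA v
  have h3 : v ∈ A → v ∈ B → False := fun u1 u2 => (Finset.disjoint_left.mp hd u1) u2
  simp only [Finset.mem_sdiff, Finset.mem_union]
  tauto

include hA hd in
lemma LC.card_ZW : (Z \ W).card = A.card + B.card := by
  rw [← hA, Finset.card_union_of_disjoint hd]

end Aux

section Main
set_option linter.unusedSectionVars false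
set_option linter.unusedVariables false

variable {V : Type} [DecidableEq V] [Fintype V] {J : SimpleGraph V} {W Z A B : Finset V}
variable (hW : W ⊆ Z) (hA : A ∪ B = Z \ W) (hd : Disjoint A B)
  (hAB : ∀ a ∈ A, ∀ b ∈ B, ¬ J.Adj a b)

include hW hA hd hAB in
lemma LC.eWZ_split : eWZ J W Z = eWZ J (W ∪ A) Z + eWZ J (W ∪ B) Z := by
  unfold eWZ
  rw [Nat.card_coe_set_eq, Nat.card_coe_set_eq, Nat.card_coe_set_eq,
    LC.rooted_split hW hA hd hAB,
    Set.ncard_union_eq (LC.rooted_disj hW hA hd hAB) (Set.toFinite _) (Set.toFinite _)]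

include hW hA hd hAB in
lemma LC.fix_edge {σ : Equiv.Perm V} (hfix : ∀ v ∈ W ∪ A, σ v = v)
    {e : Sym2 V} (he : e ∈ rootedEdges J (W ∪ B) Z) : Sym2.map σ e = e := by
  induction e using Sym2.ind with
  | _ x y =>
    rw [LC.mem_rooted_pair] at he
    obtain ⟨ha, hxZ, hyZ, hn⟩ := he
    simp only [Finset.mem_union] at hn
    have hdx : x ∈ A → x ∈ B → False := fun u1 u2 => (Finset.disjoint_left.mp hd u1) u2
    have hdy : y ∈ A → y ∈ B → False := fun u1 u2 => (Finset.disjoint_left.mp hd u1) u2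
    have e1 : x ∈ A → y ∈ B → False := fun u1 u2 => hAB x u1 y u2 ha
    have e2 : y ∈ A → x ∈ B → False := fun u1 u2 => hAB y u1 x u2 ha.symm
    have hx := (LC.memZ hA hW x).mp hxZ
    have hy := (LC.memZ hA hW y).mp hyZ
    have key : (x ∈ W ∨ x ∈ A) ∧ (y ∈ W ∨ y ∈ A) := by tauto
    refine LC.sym2_map_fix ?_
    intro v hv
    rcases Sym2.mem_iff.mp hv with rfl | rfl
    · exact hfix v (Finset.mem_union.mpr key.1)
    · exact hfix v (Finset.mem_union.mpr key.2)

include hW hA hd hAB in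
lemma LC.iff_edge {σ : Equiv.Perm V} (hfix : ∀ v ∈ W ∪ A, σ v = v)
    (hout : ∀ v, v ∉ Z → σ v = v) :
    ∀ e, e ∈ rootedEdges J (W ∪ B) Z ↔ Sym2.map σ e ∈ rootedEdges J (W ∪ B) Z := by
  intro e
  constructor
  · intro he; rwa [LC.fix_edge hW hA hd hAB hfix he]
  · intro he
    have hfix' : ∀ v ∈ W ∪ A, σ⁻¹ v = v := by
      intro v hv
      conv_lhs => rw [← hfix v hv]
      exact σ.symm_apply_apply v
    have h2 : Sym2.map ⇑σ⁻¹ (Sym2.map ⇑σ e) = e := by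
      induction e using Sym2.ind with
      | _ x y => simp
    have := LC.fix_edge hW hA hd hAB (σ := σ⁻¹) hfix' he
    rw [h2] at this
    rw [this]; exact he

lemma LC.autWZ_pos : 0 < autWZ J W Z := by
  have : Nonempty {σ : Equiv.Perm V // (∀ v ∈ W, σ v = v) ∧ (∀ v, v ∉ Z → σ v = v) ∧
      ∀ e, e ∈ rootedEdges J W Z ↔ Sym2.map σ e ∈ rootedEdges J W Z} := by
    refine ⟨1, fun v _ => rfl, fun v _ => rfl, fun e => ?_⟩
    have : Sym2.map ⇑(1 : Equiv.Perm V) e = e := by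
      induction e using Sym2.ind with
      | _ x y => simp
    rw [this]
  exact Nat.card_pos

include hW hA hd hAB in
lemma LC.aut_mul_le : autWZ J (W ∪ A) Z * autWZ J (W ∪ B) Z ≤ autWZ J W Z := by
  have hA' : B ∪ A = Z \ W := by rw [Finset.union_comm]; exact hA
  have hd' : Disjoint B A := hd.symm
  have hAB' : ∀ b ∈ B, ∀ a ∈ A, ¬ J.Adj b a := fun b hb a ha h => hAB a ha b hb h.symm
  have hsplit := LC.rooted_split hW hA hd hAB
  unfold autWZ
  rw [← Nat.card_prod]
  have key : ∀ (σ τ : Equiv.Perm V),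
      ((∀ v ∈ W ∪ A, σ v = v) ∧ (∀ v, v ∉ Z → σ v = v) ∧
        ∀ e, e ∈ rootedEdges J (W ∪ A) Z ↔ Sym2.map σ e ∈ rootedEdges J (W ∪ A) Z) →
      ((∀ v ∈ W ∪ B, τ v = v) ∧ (∀ v, v ∉ Z → τ v = v) ∧
        ∀ e, e ∈ rootedEdges J (W ∪ B) Z ↔ Sym2.map τ e ∈ rootedEdges J (W ∪ B) Z) →
      ((∀ v ∈ W, (σ * τ) v = v) ∧ (∀ v, v ∉ Z → (σ * τ) v = v) ∧
        ∀ e, e ∈ rootedEdges J W Z ↔ Sym2.map ⇑(σ * τ) e ∈ rootedEdges J W Z) := by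
    rintro σ τ ⟨f1, f2, f3⟩ ⟨g1, g2, g3⟩
    have sB := LC.iff_edge hW hA hd hAB f1 f2
    have tA := LC.iff_edge (A := B) (B := A) hW hA' hd' hAB' g1 g2
    refine ⟨?_, ?_, ?_⟩
    · intro v hv
      have h1 : τ v = v := g1 v (Finset.mem_union_left _ hv)
      have h2 : σ v = v := f1 v (Finset.mem_union_left _ hv)
      simp [Equiv.Perm.mul_apply, h1, h2]
    · intro v hv
      simp [Equiv.Perm.mul_apply, g2 v hv, f2 v hv]
    · intro e
      have hm : Sym2.map ⇑(σ * τ) e = Sym2.map ⇑σ (Sym2.map ⇑τ e) := by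
        induction e using Sym2.ind with
        | _ x y => simp
      rw [hm, hsplit]
      simp only [Set.mem_union]
      rw [or_congr (tA e) (g3 e), or_congr (f3 _) (sB _)]
  set T1 := {σ : Equiv.Perm V // (∀ v ∈ W ∪ A, σ v = v) ∧ (∀ v, v ∉ Z → σ v = v) ∧
      ∀ e, e ∈ rootedEdges J (W ∪ A) Z ↔ Sym2.map σ e ∈ rootedEdges J (W ∪ A) Z}
  set T2 := {σ : Equiv.Perm V // (∀ v ∈ W ∪ B, σ v = v) ∧ (∀ v, v ∉ Z → σ v = v) ∧
      ∀ e, e ∈ rootedEdges J (W ∪ B) Z ↔ Sym2.map σ e ∈ rootedEdges J (W ∪ B) Z}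
  refine Nat.card_le_card_of_injective
    (fun st : T1 × T2 => (⟨st.1.1 * st.2.1, key st.1.1 st.2.1 st.1.2 st.2.2⟩ :
      {σ : Equiv.Perm V // (∀ v ∈ W, σ v = v) ∧ (∀ v, v ∉ Z → σ v = v) ∧
        ∀ e, e ∈ rootedEdges J W Z ↔ Sym2.map σ e ∈ rootedEdges J W Z})) ?_
  rintro ⟨⟨σ1, hσ1⟩, ⟨τ1, hτ1⟩⟩ ⟨⟨σ2, hσ2⟩, ⟨τ2, hτ2⟩⟩ h
  have hmul : σ1 * τ1 = σ2 * τ2 := congrArg Subtype.val h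
  have hσ : σ1 = σ2 := by
    ext v
    by_cases hv : v ∈ B
    · have e1 : τ1 v = v := hτ1.1 v (Finset.mem_union_right _ hv)
      have e2 : τ2 v = v := hτ2.1 v (Finset.mem_union_right _ hv)
      have := congrFun (congrArg (fun (π : Equiv.Perm V) => (π : V → V)) hmul) v
      simpa [Equiv.Perm.mul_apply, e1, e2] using this
    · have hv' : σ1 v = v ∧ σ2 v = v := by
        by_cases hz : v ∈ Z
        · rcases (LC.memZ hA hW v).mp hz with h' | h' | h'
          · exact ⟨hσ1.1 v (Finset.mem_union_left _ h'), hσ2.1 v (Finset.mem_union_left _ h')⟩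
          · exact ⟨hσ1.1 v (Finset.mem_union_right _ h'), hσ2.1 v (Finset.mem_union_right _ h')⟩
          · exact absurd h' hv
        · exact ⟨hσ1.2.1 v hz, hσ2.2.1 v hz⟩
      rw [hv'.1, hv'.2]
  have hτ : τ1 = τ2 := by
    rw [hσ] at hmul
    exact mul_left_cancel hmul
  simp only [Prod.mk.injEq, Subtype.mk.injEq]
  exact ⟨Subtype.ext hσ, Subtype.ext hτ⟩

lemma LC.mu_nonneg {m : ℕ} {p : ℝ} (hp0 : 0 ≤ p) : 0 ≤ mu m p J W Z :=
  div_nonneg (mul_nonneg (pow_nonneg (Nat.cast_nonneg _) _) (pow_nonneg hp0 _))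
    (Nat.cast_nonneg _)

include hW hA hd hAB in
lemma LC.mu_le {m : ℕ} {p : ℝ} (hp0 : 0 ≤ p) :
    mu m p J W Z ≤ mu m p J (W ∪ A) Z * mu m p J (W ∪ B) Z := by
  have hA' : B ∪ A = Z \ W := by rw [Finset.union_comm]; exact hA
  unfold mu
  have e1 := LC.eWZ_split hW hA hd hAB
  have hc1 : Z \ (W ∪ A) = B := LC.sdiff_WA hW hA hd
  have hc2 : Z \ (W ∪ B) = A := LC.sdiff_WA hW hA' hd.symm
  have hcard := LC.card_ZW hA hd
  rw [e1, hc1, hc2, hcard]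
  have ha : (0:ℝ) < autWZ J (W ∪ A) Z := by exact_mod_cast LC.autWZ_pos
  have hb : (0:ℝ) < autWZ J (W ∪ B) Z := by exact_mod_cast LC.autWZ_pos
  have hc : (0:ℝ) < autWZ J W Z := by exact_mod_cast LC.autWZ_pos
  have hab : (autWZ J (W ∪ A) Z : ℝ) * autWZ J (W ∪ B) Z ≤ autWZ J W Z := by
    exact_mod_cast LC.aut_mul_le hW hA hd hAB
  rw [div_mul_div_comm]
  have hnum : (m:ℝ) ^ (A.card + B.card) * p ^ (eWZ J (W ∪ A) Z + eWZ J (W ∪ B) Z)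
      = ((m:ℝ) ^ B.card * p ^ eWZ J (W ∪ A) Z) * ((m:ℝ) ^ A.card * p ^ eWZ J (W ∪ B) Z) := by
    rw [pow_add, pow_add]; ring
  rw [hnum]
  have hX : 0 ≤ ((m:ℝ) ^ B.card * p ^ eWZ J (W ∪ A) Z) *
      ((m:ℝ) ^ A.card * p ^ eWZ J (W ∪ B) Z) :=
    mul_nonneg (mul_nonneg (pow_nonneg (Nat.cast_nonneg _) _) (pow_nonneg hp0 _))
      (mul_nonneg (pow_nonneg (Nat.cast_nonneg _) _) (pow_nonneg hp0 _))
  rw [div_le_div_iff₀ hc (mul_pos ha hb)]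
  exact mul_le_mul_of_nonneg_left hab hX

end Main

/-- If `J[W,Z]` is `p`-leading with `μ_p(W,Z) ≥ 1`, then `J[Z \ W]` is connected. -/
theorem leading_connected {n : ℕ} {p : ℝ} (hp0 : 0 ≤ p) (hp1 : p ≤ 1)
    (J : SimpleGraph (Fin n)) (W Z : Finset (Fin n)) (hWZ : W ⊂ Z)
    (hlead : Leading n p J W Z) (hmu : 1 ≤ mu n p J W Z) :
    (J.induce ((Z \ W : Finset (Fin n)) : Set (Fin n))).Connected := by
  classical
  obtain ⟨u0, hu0Z, hu0W⟩ : ∃ u, u ∈ Z ∧ u ∉ W := by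
    obtain ⟨u, hu1, hu2⟩ := Finset.exists_of_ssubset hWZ
    exact ⟨u, hu1, hu2⟩
  have hu0S : u0 ∈ ((Z \ W : Finset (Fin n)) : Set (Fin n)) := by
    simp [Finset.mem_sdiff, hu0Z, hu0W]
  rw [connected_iff]
  set S : Set (Fin n) := ((Z \ W : Finset (Fin n)) : Set (Fin n)) with hS
  set G : SimpleGraph S := J.induce S with hG
  refine ⟨?_, ⟨⟨u0, hu0S⟩⟩⟩
  by_contra hpre
  simp only [SimpleGraph.Preconnected] at hpre
  push_neg at hpre
  obtain ⟨x, y, hxy⟩ := hpre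
  set A : Finset (Fin n) := (Z \ W).filter
    (fun v => ∃ h : v ∈ S, G.Reachable x ⟨v, h⟩) with hA_def
  set B : Finset (Fin n) := (Z \ W) \ A with hB_def
  have hAsub : A ⊆ Z \ W := Finset.filter_subset _ _
  have hA : A ∪ B = Z \ W := Finset.union_sdiff_of_subset hAsub
  have hd : Disjoint A B := Finset.disjoint_sdiff
  have memS : ∀ v, v ∈ Z \ W → v ∈ S := fun v hv => by simpa [hS] using hv
  have hAB : ∀ a ∈ A, ∀ b ∈ B, ¬ J.Adj a b := by
    intro a ha b hb hadj
    obtain ⟨haZW, h1, hreach⟩ := Finset.mem_filter.mp ha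
    have hbmem := Finset.mem_sdiff.mp hb
    have hbS : b ∈ S := memS b hbmem.1
    have hadj' : G.Adj ⟨a, h1⟩ ⟨b, hbS⟩ := hadj
    exact hbmem.2 (Finset.mem_filter.mpr ⟨hbmem.1, hbS, hreach.trans hadj'.reachable⟩)
  have hxZW : (x : Fin n) ∈ Z \ W := by simpa [hS] using x.2
  have hyZW : (y : Fin n) ∈ Z \ W := by simpa [hS] using y.2
  have hxA : (x : Fin n) ∈ A := Finset.mem_filter.mpr ⟨hxZW, x.2, Reachable.refl x⟩
  have hyB : (y : Fin n) ∈ B := by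
    refine Finset.mem_sdiff.mpr ⟨hyZW, fun hyA => ?_⟩
    obtain ⟨-, h1, hreach⟩ := Finset.mem_filter.mp hyA
    have hy' : (⟨(y : Fin n), h1⟩ : S) = y := Subtype.ext rfl
    rw [hy'] at hreach
    exact hxy hreach
  have hxW : (x : Fin n) ∉ W := (Finset.mem_sdiff.mp hxZW).2
  have hyW : (y : Fin n) ∉ W := (Finset.mem_sdiff.mp hyZW).2
  have hY1 : W ⊂ W ∪ A :=
    (Finset.ssubset_iff_of_subset Finset.subset_union_left).mpr
      ⟨x, Finset.mem_union_right _ hxA, hxW⟩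
  have hY1' : W ⊂ W ∪ B :=
    (Finset.ssubset_iff_of_subset Finset.subset_union_left).mpr
      ⟨y, Finset.mem_union_right _ hyB, hyW⟩
  have hsubZ : ∀ C : Finset (Fin n), C ⊆ Z \ W → W ∪ C ⊆ Z := by
    intro C hC
    exact Finset.union_subset hWZ.subset (hC.trans (Finset.sdiff_subset))
  have hY2 : W ∪ A ⊂ Z := by
    refine (Finset.ssubset_iff_of_subset (hsubZ A hAsub)).mpr
      ⟨y, (Finset.mem_sdiff.mp hyZW).1, fun hy => ?_⟩
    rcases Finset.mem_union.mp hy with h | h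
    · exact hyW h
    · exact (Finset.mem_sdiff.mp hyB).2 h
  have hY2' : W ∪ B ⊂ Z := by
    refine (Finset.ssubset_iff_of_subset (hsubZ B (Finset.sdiff_subset))).mpr
      ⟨x, (Finset.mem_sdiff.mp hxZW).1, fun hx => ?_⟩
    rcases Finset.mem_union.mp hx with h | h
    · exact hxW h
    · exact (Finset.disjoint_left.mp hd hxA) h
  have m1 := hlead (W ∪ A) hY1 hY2
  have m2 := hlead (W ∪ B) hY1' hY2'
  have hle := LC.mu_le hWZ.subset hA hd hAB hp0 (m := n)
  have nn1 : 0 ≤ mu n p J (W ∪ A) Z := LC.mu_nonneg hp0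
  have nn2 : 0 ≤ mu n p J (W ∪ B) Z := LC.mu_nonneg hp0
  have hprod : mu n p J (W ∪ A) Z * mu n p J (W ∪ B) Z < 1 := by
    have := mul_lt_mul'' m1 m2 nn1 nn2
    simpa using this
  linarith
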